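/- Let h > 0, d ∈ ℕ, and let L : ℝ^d × ℝ^d → ℝ be C¹ such that D₁L is Lipschitz with constant L₁ and D₂L is Lipschitz with constant L₂ (with respect to the norm |(x,y)| = |x| + |y| on ℝ^d × ℝ^d). Let q̃, q̄ : [0,h] → ℝ^d be C¹ curves such that t ↦ D₂L(q̃(t),q̃'(t)) and t ↦ D₂L(q̄(t),q̄'(t)) are differentiable with |(d/dt) D₂L(q̃(t),q̃'(t)) − (d/dt) D₂L(q̄(t),q̄'(t))| ≤ L₃ ( |q̃(t) − q̄(t)| + |q̃'(t) − q̄'(t)| ) for all t ∈ [0,h]. Let φ₁ : [0,h] → ℝ be C¹ and define Δ : [0,h] → ℝ^d by Δ(t) = ( D₁L(q̃(t),q̃'(t)) − D₁L(q̄(t),q̄'(t)) )·φ₁(t) + ( D₂L(q̃(t),q̃'(t)) − D₂L(q̄(t),q̄'(t)) )·φ₁'(t). Let a quadrature rule with nodes c_j ∈ [0,1] and weights b_j satisfy |h·Σ_{j=1}^m b_j Δ(c_j h) − ∫₀ʰ Δ(t) dt| ≤ η with η ≤ ‖q̃ − q̄‖_{1,1}. Then for every a ∈ ℝ^d, | (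 h·Σ_{j=1}^m b_j Δ(c_j h) )ᵀ a | ≤ C · |a| · ( ‖q̃ − q̄‖_{1,1} + ‖q̃ − q̄‖_∞ + ‖q̃' − q̄'‖_∞ ), where C = max(L₁ + L₃, 2L₂)·‖φ₁‖_∞ + 1. -/

import Mathlib

open scoped BigOperators

/-!
Write `A = D₁L(q̃,q̃') − D₁L(q̄,q̄')` and `P = p̃ − p̄`, so that `Δ = φ₁ A + φ₁' P`. Integrating
by parts, `∫₀ʰ Δ = ∫₀ʰ φ₁ (A − P') + [φ₁ P]₀ʰ`. The Lipschitz bounds on `D₁L` and on `P'` bound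
the integrand by `(L₁ + L₃) ‖φ₁‖_∞ (|q̃ − q̄| + |q̃' − q̄'|)`, whose integral is the `W^{1,1}`
norm, and the Lipschitz bound on `D₂L` bounds the boundary term by
`2 L₂ ‖φ₁‖_∞ (‖q̃ − q̄‖_∞ + ‖q̃' − q̄'‖_∞)`. The quadrature error adds at most
`η ≤ ‖q̃ − q̄‖_{1,1}`. Integrating by parts is what keeps `‖φ₁'‖_∞` out of the constant.
-/

open Set MeasureTheory intervalIntegral

theorem nonneg_of_norm_sub_le_mul_norm_sub {E F : Type*} [NormedAddCommGroup E] [Nontrivial E]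
    [NormedAddCommGroup F] {g : E → F} {K : ℝ} (hg : ∀ y y', ‖g y - g y'‖ ≤ K * ‖y - y'‖) :
    0 ≤ K := by
  obtain ⟨y, hy⟩ := exists_ne (0 : E)
  have := (norm_nonneg _).trans (hg y 0)
  rw [sub_zero] at this
  exact nonneg_of_mul_nonneg_left this (norm_pos_iff.2 hy)

section PartialDerivatives

variable {E F G : Type*} [NormedAddCommGroup E] [NormedSpace ℝ E] [NormedAddCommGroup F]
  [NormedSpace ℝ F] [NormedAddCommGroup G] [NormedSpace ℝ G] {f : E → F → G}

theorem fderiv_partial_fst_eq_comp_inl (hf : Differentiable ℝ fun p : E × F => f p.1 p.2)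
    (x : E) (y : F) :
    fderiv ℝ (fun u => f u y) x =
      (fderiv ℝ (fun p : E × F => f p.1 p.2) (x, y)).comp (ContinuousLinearMap.inl ℝ E F) := by
  exact ((hf (x, y)).hasFDerivAt.comp x (hasFDerivAt_prodMk_left (𝕜 := ℝ) x y)).fderiv

theorem continuous_fderiv_partial_fst_comp {X : Type*} [TopologicalSpace X] {x : X → E}
    {y : X → F} (hf : ContDiff ℝ 1 fun p : E × F => f p.1 p.2) (hx : Continuous x)
    (hy : Continuous y) : Continuous fun s => fderiv ℝ (fun u => f u (y s)) (x s) := by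
  simp_rw [fderiv_partial_fst_eq_comp_inl (hf.differentiable one_ne_zero)]
  exact ((hf.continuous_fderiv one_ne_zero).comp (hx.prodMk hy)).clm_comp continuous_const

end PartialDerivatives

section IntegrationByParts

variable {F : Type*} [NormedAddCommGroup F] [NormedSpace ℝ F] [CompleteSpace F]
  {φ : ℝ → ℝ} {A P : ℝ → F} {a b : ℝ}

theorem intervalIntegrable_deriv_of_norm_le {g : ℝ → ℝ} (hP : ∀ t ∈ uIcc a b, ‖deriv P t‖ ≤ g t)
    (hg : IntervalIntegrable g volume a b) : IntervalIntegrable (deriv P) volume a b :=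
  hg.mono_fun (stronglyMeasurable_deriv P).aestronglyMeasurable <|
    (ae_restrict_mem measurableSet_uIoc).mono fun t ht =>
      (hP t (uIoc_subset_uIcc ht)).trans (Real.le_norm_self _)

theorem integral_smul_add_deriv_smul_eq (hφ : ContDiff ℝ 1 φ)
    (hA : IntervalIntegrable A volume a b) (hP : ∀ t ∈ uIcc a b, DifferentiableAt ℝ P t)
    (hP' : IntervalIntegrable (deriv P) volume a b) :
    ∫ t in a..b, (φ t • A t + deriv φ t • P t) =
      (∫ t in a..b, φ t • (A t - deriv P t)) + (φ b • P b - φ a • P a) := by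
  have hφc := hφ.continuous.continuousOn (s := uIcc a b)
  have hφ' : Continuous (deriv φ) := hφ.continuous_deriv le_rfl
  have hPc : ContinuousOn P (uIcc a b) := fun t ht => (hP t ht).continuousAt.continuousWithinAt
  have ibp := integral_smul_deriv_eq_deriv_smul
    (fun t _ => (hφ.differentiable one_ne_zero t).hasDerivAt) (fun t ht => (hP t ht).hasDerivAt)
    (hφ'.intervalIntegrable a b) hP'
  simp_rw [smul_sub]
  rw [integral_add (f := fun t => φ t • A t) (g := fun t => deriv φ t • P t)
      (hA.continuousOn_smul hφc) (hφ'.continuousOn.smul hPc).intervalIntegrable,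
    integral_sub (hA.continuousOn_smul hφc) (hP'.continuousOn_smul hφc), ibp]
  abel

theorem norm_integral_smul_add_deriv_smul_le {g : ℝ → ℝ} {M : ℝ} (hab : a ≤ b)
    (hφ : ContDiff ℝ 1 φ) (hA : IntervalIntegrable A volume a b)
    (hP : ∀ t ∈ Icc a b, DifferentiableAt ℝ P t) (hP' : IntervalIntegrable (deriv P) volume a b)
    (hφM : ∀ t ∈ Icc a b, |φ t| ≤ M) (hAP : ∀ t ∈ Icc a b, ‖A t - deriv P t‖ ≤ g t)
    (hg : IntervalIntegrable g volume a b) :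
    ‖∫ t in a..b, (φ t • A t + deriv φ t • P t)‖ ≤
      M * (∫ t in a..b, g t) + M * (‖P a‖ + ‖P b‖) := by
  have hM : 0 ≤ M := (abs_nonneg _).trans (hφM a (left_mem_Icc.2 hab))
  have hsmul : ∀ t ∈ Icc a b, ∀ v : F, ‖φ t • v‖ ≤ M * ‖v‖ := fun t ht v => by
    rw [norm_smul, Real.norm_eq_abs]
    exact mul_le_mul_of_nonneg_right (hφM t ht) (norm_nonneg v)
  have hint : ‖∫ t in a..b, φ t • (A t - deriv P t)‖ ≤ M * ∫ t in a..b, g t := by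
    rw [← intervalIntegral.integral_const_mul]
    refine norm_integral_le_of_norm_le hab (ae_of_all _ fun t ht => ?_) (hg.const_mul M)
    have ht' := Ioc_subset_Icc_self ht
    exact (hsmul t ht' _).trans (mul_le_mul_of_nonneg_left (hAP t ht') hM)
  have hbdry : ‖φ b • P b - φ a • P a‖ ≤ M * (‖P a‖ + ‖P b‖) :=
    calc _ ≤ ‖φ b • P b‖ + ‖φ a • P a‖ := norm_sub_le _ _
      _ ≤ M * ‖P b‖ + M * ‖P a‖ :=
        add_le_add (hsmul b (right_mem_Icc.2 hab) _) (hsmul a (left_mem_Icc.2 hab) _)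
      _ = _ := by ring
  rw [integral_smul_add_deriv_smul_eq hφ hA (by rwa [uIcc_of_le hab]) hP']
  exact (norm_add_le _ _).trans (add_le_add hint hbdry)

theorem norm_integral_smul_add_deriv_smul_le_of_norm_le {e : ℝ → ℝ} {K₁ K₂ K₃ M S : ℝ}
    (hab : a ≤ b) (hφ : ContDiff ℝ 1 φ) (hA : IntervalIntegrable A volume a b)
    (hP : ∀ t ∈ Icc a b, DifferentiableAt ℝ P t) (he : IntervalIntegrable e volume a b)
    (hAe : ∀ t ∈ Icc a b, ‖A t‖ ≤ K₁ * e t) (hPe : ∀ t ∈ Icc a b, ‖P t‖ ≤ K₂ * e t)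
    (hP'e : ∀ t ∈ Icc a b, ‖deriv P t‖ ≤ K₃ * e t) (hK₂ : 0 ≤ K₂)
    (hφM : ∀ t ∈ Icc a b, |φ t| ≤ M) (heS : ∀ t ∈ Icc a b, e t ≤ S) :
    ‖∫ t in a..b, (φ t • A t + deriv φ t • P t)‖ ≤
      M * ((K₁ + K₃) * ∫ t in a..b, e t) + M * (2 * K₂ * S) := by
  have hM : 0 ≤ M := (abs_nonneg _).trans (hφM a (left_mem_Icc.2 hab))
  have hP' : IntervalIntegrable (deriv P) volume a b :=
    intervalIntegrable_deriv_of_norm_le (fun t ht => hP'e t (by rwa [uIcc_of_le hab] at ht))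
      (he.const_mul K₃)
  have hAP : ∀ t ∈ Icc a b, ‖A t - deriv P t‖ ≤ (K₁ + K₃) * e t := fun t ht => by
    rw [add_mul]
    exact (norm_sub_le _ _).trans (add_le_add (hAe t ht) (hP'e t ht))
  have hPS : ∀ t ∈ Icc a b, ‖P t‖ ≤ K₂ * S := fun t ht =>
    (hPe t ht).trans (mul_le_mul_of_nonneg_left (heS t ht) hK₂)
  refine (norm_integral_smul_add_deriv_smul_le hab hφ hA hP hP' hφM hAP (he.const_mul _)).trans ?_
  rw [intervalIntegral.integral_const_mul]
  refine add_le_add_right (mul_le_mul_of_nonneg_left ?_ hM) _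
  linarith [hPS a (left_mem_Icc.2 hab), hPS b (right_mem_Icc.2 hab)]

end IntegrationByParts

theorem sSup_image_nonneg {α : Type*} {s : Set α} {g : α → ℝ} (hg : ∀ t, 0 ≤ g t) :
    0 ≤ sSup (g '' s) :=
  Real.sSup_nonneg fun _ ⟨t, _, hgt⟩ => hgt ▸ hg t

theorem abs_apply_le_of_norm_sub_le_of_norm_le {E : Type*} [NormedAddCommGroup E]
    [NormedSpace ℝ E] {T I : E →L[ℝ] ℝ} {M W S k₁ k₂ : ℝ} (hM : 0 ≤ M) (hS : 0 ≤ S)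
    (hTI : ‖T - I‖ ≤ W) (hI : ‖I‖ ≤ M * (k₁ * W) + M * (k₂ * S)) (a : E) :
    |T a| ≤ (max k₁ k₂ * M + 1) * ‖a‖ * (W + S) := by
  have hW : 0 ≤ W := (norm_nonneg _).trans hTI
  have hT : ‖T‖ ≤ (max k₁ k₂ * M + 1) * (W + S) := by
    have := (norm_le_norm_add_norm_sub' T I).trans (add_le_add hI hTI)
    linarith [mul_le_mul_of_nonneg_right (le_max_left k₁ k₂) (mul_nonneg hM hW),
      mul_le_mul_of_nonneg_right (le_max_right k₁ k₂) (mul_nonneg hM hS)]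
  calc |T a| ≤ ‖T‖ * ‖a‖ := by rw [← Real.norm_eq_abs]; exact T.le_opNorm a
    _ ≤ (max k₁ k₂ * M + 1) * (W + S) * ‖a‖ := by gcongr
    _ = _ := by ring

theorem galerkin_noether_map_difference_bound_general
    (h : ℝ) (hh : 0 < h) (d : ℕ)
    (L : EuclideanSpace ℝ (Fin d) → EuclideanSpace ℝ (Fin d) → ℝ)
    (hL : ContDiff ℝ 1 fun p : EuclideanSpace ℝ (Fin d) × EuclideanSpace ℝ (Fin d) =>
      L p.1 p.2)
    (L₁ L₂ L₃ : ℝ)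
    (hD1Lip : ∀ x y x' y' : EuclideanSpace ℝ (Fin d),
      ‖fderiv ℝ (fun u => L u y) x - fderiv ℝ (fun u => L u y') x'‖ ≤
        L₁ * (‖x - x'‖ + ‖y - y'‖))
    (hD2Lip : ∀ x y x' y' : EuclideanSpace ℝ (Fin d),
      ‖fderiv ℝ (fun v => L x v) y - fderiv ℝ (fun v => L x' v) y'‖ ≤
        L₂ * (‖x - x'‖ + ‖y - y'‖))
    (qtil qbar : ℝ → EuclideanSpace ℝ (Fin d))
    (hqtil : ContDiff ℝ 1 qtil) (hqbar : ContDiff ℝ 1 qbar)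
    (ptil pbar : ℝ → EuclideanSpace ℝ (Fin d) →L[ℝ] ℝ)
    (hptil : ∀ t, ptil t = fderiv ℝ (fun v => L (qtil t) v) (deriv qtil t))
    (hpbar : ∀ t, pbar t = fderiv ℝ (fun v => L (qbar t) v) (deriv qbar t))
    (hptilDiff : ∀ t ∈ Set.Icc (0 : ℝ) h, DifferentiableAt ℝ ptil t)
    (hpbarDiff : ∀ t ∈ Set.Icc (0 : ℝ) h, DifferentiableAt ℝ pbar t)
    (hD3Lip : ∀ t ∈ Set.Icc (0 : ℝ) h,
      ‖deriv ptil t - deriv pbar t‖ ≤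
        L₃ * (‖qtil t - qbar t‖ + ‖deriv qtil t - deriv qbar t‖))
    (φ₁ : ℝ → ℝ) (hφ₁ : ContDiff ℝ 1 φ₁)
    (Δ : ℝ → EuclideanSpace ℝ (Fin d) →L[ℝ] ℝ)
    (hΔ : ∀ t, Δ t =
      φ₁ t • (fderiv ℝ (fun u => L u (deriv qtil t)) (qtil t) -
          fderiv ℝ (fun u => L u (deriv qbar t)) (qbar t)) +
        deriv φ₁ t • (ptil t - pbar t))
    (m : ℕ) (c b : Fin m → ℝ)
    (η : ℝ)
    (hη : ‖(h • ∑ j, b j • Δ (c j * h)) - ∫ t in (0 : ℝ)..h, Δ t‖ ≤ η)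
    (hηN : η ≤ (∫ t in (0 : ℝ)..h, ‖qtil t - qbar t‖) +
      ∫ t in (0 : ℝ)..h, ‖deriv qtil t - deriv qbar t‖) :
    ∀ a : EuclideanSpace ℝ (Fin d),
      |(h • ∑ j, b j • Δ (c j * h)) a| ≤
        (max (L₁ + L₃) (2 * L₂) * sSup ((fun t => |φ₁ t|) '' Set.Icc (0 : ℝ) h) + 1) *
          ‖a‖ *
          (((∫ t in (0 : ℝ)..h, ‖qtil t - qbar t‖) +
              ∫ t in (0 : ℝ)..h, ‖deriv qtil t - deriv qbar t‖) +
            sSup ((fun t => ‖qtil t - qbar t‖) '' Set.Icc (0 : ℝ) h) +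
            sSup ((fun t => ‖deriv qtil t - deriv qbar t‖) '' Set.Icc (0 : ℝ) h)) := by
  intro a
  -- `a ≠ 0` makes the space nontrivial, which forces `0 ≤ L₂`.
  rcases eq_or_ne a 0 with rfl | ha
  · simp
  have : Nontrivial (EuclideanSpace ℝ (Fin d)) := nontrivial_of_ne a 0 ha
  have hL₂ : 0 ≤ L₂ := nonneg_of_norm_sub_le_mul_norm_sub fun y y' => by
    simpa using hD2Lip 0 y 0 y'
  have hdqtil := hqtil.continuous_deriv le_rfl
  have hdqbar := hqbar.continuous_deriv le_rfl
  have he₀ : Continuous fun t => ‖qtil t - qbar t‖ := (hqtil.continuous.sub hqbar.continuous).norm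
  have he₁ : Continuous fun t => ‖deriv qtil t - deriv qbar t‖ := (hdqtil.sub hdqbar).norm
  have hA := (continuous_fderiv_partial_fst_comp hL hqtil.continuous hdqtil).sub
    (continuous_fderiv_partial_fst_comp hL hqbar.continuous hdqbar)
  have hIΔ := norm_integral_smul_add_deriv_smul_le_of_norm_le (P := fun t => ptil t - pbar t)
    (e := fun t => ‖qtil t - qbar t‖ + ‖deriv qtil t - deriv qbar t‖) hh.le hφ₁
    (hA.intervalIntegrable 0 h) (fun t ht => (hptilDiff t ht).sub (hpbarDiff t ht))
    ((he₀.add he₁).intervalIntegrable 0 h) (fun t _ => hD1Lip _ _ _ _)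
    (fun t _ => by rw [hptil, hpbar]; exact hD2Lip _ _ _ _)
    (fun t ht => by rw [deriv_fun_sub (hptilDiff t ht) (hpbarDiff t ht)]; exact hD3Lip t ht) hL₂
    (fun t ht => hφ₁.continuous.abs.continuousOn.le_sSup_image_Icc ht)
    (fun t ht => add_le_add (he₀.continuousOn.le_sSup_image_Icc ht)
      (he₁.continuousOn.le_sSup_image_Icc ht))
  simp only [Pi.sub_apply] at hIΔ
  rw [integral_add (he₀.intervalIntegrable 0 h) (he₁.intervalIntegrable 0 h),
    ← integral_congr fun t _ => hΔ t] at hIΔ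
  rw [add_assoc _ (sSup _)]
  exact abs_apply_le_of_norm_sub_le_of_norm_le (sSup_image_nonneg fun t => abs_nonneg _)
    (add_nonneg (sSup_image_nonneg fun t => norm_nonneg _)
      (sSup_image_nonneg fun t => norm_nonneg _)) (hη.trans hηN) hIΔ a

/-- **Bound on the difference of the Galerkin Noether map evaluated on the Galerkin
curve `q̃` and on the exact Euler–Lagrange solution `q̄`.**  Here
`Δ(t) = (D₁L(q̃,q̃') − D₁L(q̄,q̄'))·φ₁(t) + (D₂L(q̃,q̃') − D₂L(q̄,q̄'))·φ₁'(t)` is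
covector-valued, `p̃, p̄` are the momenta along the two curves, `η` bounds the
quadrature error on `Δ` and is itself bounded by the `W^{1,1}` norm of `q̃ − q̄`,
and `C = max(L₁ + L₃, 2L₂)·‖φ₁‖_∞ + 1`. -/
theorem galerkin_noether_map_difference_bound
    (h : ℝ) (hh : 0 < h) (d : ℕ)
    (L : EuclideanSpace ℝ (Fin d) → EuclideanSpace ℝ (Fin d) → ℝ)
    (hL : ContDiff ℝ 1 fun p : EuclideanSpace ℝ (Fin d) × EuclideanSpace ℝ (Fin d) =>
      L p.1 p.2)
    (L₁ L₂ L₃ : ℝ)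
    (hD1Lip : ∀ x y x' y' : EuclideanSpace ℝ (Fin d),
      ‖fderiv ℝ (fun u => L u y) x - fderiv ℝ (fun u => L u y') x'‖ ≤
        L₁ * (‖x - x'‖ + ‖y - y'‖))
    (hD2Lip : ∀ x y x' y' : EuclideanSpace ℝ (Fin d),
      ‖fderiv ℝ (fun v => L x v) y - fderiv ℝ (fun v => L x' v) y'‖ ≤
        L₂ * (‖x - x'‖ + ‖y - y'‖))
    (qtil qbar : ℝ → EuclideanSpace ℝ (Fin d))
    (hqtil : ContDiff ℝ 1 qtil) (hqbar : ContDiff ℝ 1 qbar)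
    (ptil pbar : ℝ → EuclideanSpace ℝ (Fin d) →L[ℝ] ℝ)
    (hptil : ∀ t, ptil t = fderiv ℝ (fun v => L (qtil t) v) (deriv qtil t))
    (hpbar : ∀ t, pbar t = fderiv ℝ (fun v => L (qbar t) v) (deriv qbar t))
    (hptilDiff : ∀ t ∈ Set.Icc (0 : ℝ) h, DifferentiableAt ℝ ptil t)
    (hpbarDiff : ∀ t ∈ Set.Icc (0 : ℝ) h, DifferentiableAt ℝ pbar t)
    (hD3Lip : ∀ t ∈ Set.Icc (0 : ℝ) h,
      ‖deriv ptil t - deriv pbar t‖ ≤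
        L₃ * (‖qtil t - qbar t‖ + ‖deriv qtil t - deriv qbar t‖))
    (φ₁ : ℝ → ℝ) (hφ₁ : ContDiff ℝ 1 φ₁)
    (Δ : ℝ → EuclideanSpace ℝ (Fin d) →L[ℝ] ℝ)
    (hΔ : ∀ t, Δ t =
      φ₁ t • (fderiv ℝ (fun u => L u (deriv qtil t)) (qtil t) -
          fderiv ℝ (fun u => L u (deriv qbar t)) (qbar t)) +
        deriv φ₁ t • (ptil t - pbar t))
    (m : ℕ) (c b : Fin m → ℝ) (hc : ∀ j, c j ∈ Set.Icc (0 : ℝ) 1)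
    (η : ℝ)
    (hη : ‖(h • ∑ j, b j • Δ (c j * h)) - ∫ t in (0 : ℝ)..h, Δ t‖ ≤ η)
    (hηN : η ≤ (∫ t in (0 : ℝ)..h, ‖qtil t - qbar t‖) +
      ∫ t in (0 : ℝ)..h, ‖deriv qtil t - deriv qbar t‖) :
    ∀ a : EuclideanSpace ℝ (Fin d),
      |(h • ∑ j, b j • Δ (c j * h)) a| ≤
        (max (L₁ + L₃) (2 * L₂) * sSup ((fun t => |φ₁ t|) '' Set.Icc (0 : ℝ) h) + 1) *
          ‖a‖ *
          (((∫ t in (0 : ℝ)..h, ‖qtil t - qbar t‖) +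
              ∫ t in (0 : ℝ)..h, ‖deriv qtil t - deriv qbar t‖) +
            sSup ((fun t => ‖qtil t - qbar t‖) '' Set.Icc (0 : ℝ) h) +
            sSup ((fun t => ‖deriv qtil t - deriv qbar t‖) '' Set.Icc (0 : ℝ) h)) :=
  galerkin_noether_map_difference_bound_general h hh d L hL L₁ L₂ L₃ hD1Lip hD2Lip qtil qbar hqtil
    hqbar ptil pbar hptil hpbar hptilDiff hpbarDiff hD3Lip φ₁ hφ₁ Δ hΔ m c b η hη hηN
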